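/- arXiv:1212.1346 — 3 statements merged into one kernel-verified Lean document; each statement's English description precedes it below -/
import Mathlib

section
/- For every deterministic finite automaton A with n states over an alphabet Σ of m letters, there exists a deterministic finite automaton with at most n(m+1)+1 states accepting exactly the nonunary part of L(A), i.e., the set of all nonunary words belonging to L(A). -/
/-- A word is unary if all of its letters are equal to one single letter
(the empty word is unary). -/
def IsUnaryWord {α : Type*} (w : List α) : Prop :=
  ∀ c ∈ w, ∀ c' ∈ w, c = c'

/-!
A DFA for the nonunary part of `L(A)` runs `A` and remembers, next to the current state of `A`,
the letter `a` if the input read so far is a nonempty power of `a`, and `none` once two different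
letters have been seen. The start state needs no `A`-component, since `A` is then in `A.start`;
this gives `n * (m + 1) + 1` states.
-/

theorem isUnaryWord_nil {α : Type*} : IsUnaryWord ([] : List α) := by
  simp [IsUnaryWord]

theorem isUnaryWord_cons_iff {α : Type*} (a : α) (w : List α) :
    IsUnaryWord (a :: w) ↔ ∀ c ∈ w, c = a := by
  refine ⟨fun h c hc => h c (List.mem_cons_of_mem a hc) a List.mem_cons_self, fun h => ?_⟩
  have hall : ∀ c ∈ a :: w, c = a := by
    simpa only [List.forall_mem_cons, true_and] using h
  intro c hc c' hc'
  rw [hall c hc, hall c' hc']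

namespace DFA

variable {α σ : Type*} [DecidableEq α]

def nonunaryPart (A : DFA α σ) : DFA α (σ × Option α ⊕ Unit) where
  start := .inr ()
  step
    | .inr (), a => .inl (A.step A.start a, some a)
    | .inl (q, t), a => .inl (A.step q a, t.filter (a == ·))
  accept := {s | ∃ q ∈ A.accept, s = .inl (q, none)}

variable (A : DFA α σ)

@[simp]
theorem nonunaryPart_step_inl (q : σ) (t : Option α) (a : α) :
    A.nonunaryPart.step (.inl (q, t)) a = .inl (A.step q a, t.filter (a == ·)) :=
  rfl

theorem nonunaryPart_evalFrom_inl (q : σ) (t : Option α) (w : List α) :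
    A.nonunaryPart.evalFrom (.inl (q, t)) w
      = .inl (A.evalFrom q w, t.filter fun b => w.all (· == b)) := by
  induction w generalizing q t with
  | nil => cases t <;> rfl
  | cons a w ih => simp [ih, List.all_cons]

theorem nonunaryPart_eval_cons (a : α) (w : List α) :
    A.nonunaryPart.eval (a :: w)
      = .inl (A.eval (a :: w), (some a).filter fun b => w.all (· == b)) :=
  nonunaryPart_evalFrom_inl A _ _ w

theorem inl_mem_nonunaryPart_accept_iff (q : σ) (t : Option α) :
    .inl (q, t) ∈ A.nonunaryPart.accept ↔ q ∈ A.accept ∧ t = none := by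
  simp [nonunaryPart]

theorem accepts_nonunaryPart :
    A.nonunaryPart.accepts = {w | w ∈ A.accepts ∧ ¬ IsUnaryWord w} := by
  ext w
  change _ ↔ w ∈ A.accepts ∧ ¬IsUnaryWord w
  cases w with
  | nil => simp [mem_accepts, isUnaryWord_nil, nonunaryPart]
  | cons a w =>
    simp [mem_accepts, nonunaryPart_eval_cons, inl_mem_nonunaryPart_accept_iff,
      isUnaryWord_cons_iff]

end DFA

/-- For every DFA `A` with `n` states over an alphabet of `m` letters,
there exists a DFA with at most `n*(m+1)+1` states accepting exactly the nonunary part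
of `L(A)`, i.e., the set of all nonunary words belonging to `L(A)`. -/
theorem dfa_nonunary_part (α σ : Type) [Fintype α] [Fintype σ] (m n : ℕ)
    (hα : Fintype.card α = m) (hσ : Fintype.card σ = n) (A : DFA α σ) :
    ∃ (σ' : Type) (_ : Fintype σ') (B : DFA α σ'),
      Fintype.card σ' ≤ n * (m + 1) + 1 ∧
      B.accepts = {w | w ∈ A.accepts ∧ ¬ IsUnaryWord w} := by
  classical
  refine ⟨σ × Option α ⊕ Unit, inferInstance, A.nonunaryPart, ?_, A.accepts_nonunaryPart⟩
  simp [hα, hσ]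
end

section
/- For every m ≥ 1 there exists a polynomial p such that for every nondeterministic finite automaton A with n states over an alphabet Σ of m letters all of whose accepted words are nonunary, the Parikh image ψ(L(A)) can be written as ψ(L(A)) = Y ∪ ⋃_{i ∈ I} Z_i, where Y, I and the linear sets Z_i with offsets v_{i,0} satisfy: Y is finite with all components bounded by p(n), |I| ≤ p(n), each Z_i has at most m generators which are linearly independent vectors from {0,1,…,n}^m and offset components bounded by p(n); and, in addition, for each i ∈ I one can choose a nonunary vector x_i ∈ ℕ^m with x_i ⪯ v_{i,0} componentwise, such that the chosen vectors x_i are pairwise distinct. -/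
/-- The Parikh map `ψ : (Fin m)^* → ℕ^m`, counting for each letter its number of
occurrences in the word. -/
def parikh {m : ℕ} (w : List (Fin m)) : Fin m → ℕ := fun i => w.count i

/-- The Parikh image `ψ(L)` of a language over the alphabet `Fin m`. -/
def parikhImage {m : ℕ} (L : Language (Fin m)) : Set (Fin m → ℕ) :=
  parikh '' L

/-- The linear set in `ℕ^m` with offset `v₀` and generators `vs 1, …, vs k`. -/
def linSet {m k : ℕ} (v₀ : Fin m → ℕ) (vs : Fin k → (Fin m → ℕ)) : Set (Fin m → ℕ) :=
  {x | ∃ c : Fin k → ℕ, x = fun i => v₀ i + ∑ j, c j * vs j i}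

/-- Vectors of `ℕ^m` are linearly independent if, over the integers, any vanishing
linear combination has all coefficients zero. -/
def LinIndepZ {m k : ℕ} (vs : Fin k → (Fin m → ℕ)) : Prop :=
  ∀ c : Fin k → ℤ, (∀ i : Fin m, ∑ j, c j * (vs j i : ℤ) = 0) → ∀ j, c j = 0

/-- A vector of `ℕ^m` is unary if it has at most one nonzero component
(the null vector is unary). -/
def VecUnary {m : ℕ} (v : Fin m → ℕ) : Prop :=
  ∀ i j : Fin m, v i ≠ 0 → v j ≠ 0 → i = j

/-!
Pumping an accepting run of an `n`-state automaton down to length below `n * n + n`, without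
changing the set of states it visits, writes every Parikh vector of the language as the Parikh
vector of a short accepting run plus a sum of Parikh vectors of cycles of length at most `n` on the
visited states; conversely every such sum belongs to the Parikh image. Among these sums take the
lexicographically least coefficient vector: the cycles used at least `relBound (m + 1) n` times
are linearly independent, because otherwise Gaussian elimination yields an integer relation among
at most `m + 1` of them with coefficients below that bound, and adding or subtracting it gives a
lexicographically smaller representation. Hence the Parikh image is a union of linear sets with
independent generators and polynomially bounded offsets.

To make the offsets pairwise distinct, measure a vector by its entry sum divided by `m * n + 1`
(its slot: adding a generator raises it by at most one) and reserve a slot for every generator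
tuple `T`, the slots of the `k`-tuples forming a block below the block of the `(k - 1)`-tuples.
If the slot of `v₀` is at most the start of the block of `T`, the linear set `v₀ + ℕ T` splits at
the least `d` for which `v₀ + d • T 0` reaches the slot of `T`: from there on it is a linear set
whose offset lies exactly in that slot, and before it, it consists of the linear sets
`v₀ + e • T 0 + ℕ (tail T)`, `e < d`, whose offsets lie below the block of the shorter tuples and
which are split recursively. An offset thus determines its linear set, and the offsets,
nonunary as members of the Parikh image, serve as the vectors `x_i`.
-/

open Finset

section BoundedRelations

variable {ι κ : Type*}

/-- Eliminating one coordinate turns `r + 1` vectors with entries bounded by `N` into `r` vectors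
with entries bounded by `2 * N ^ 2`. -/
def relBound : ℕ → ℕ → ℕ
  | 0, _ => 1
  | r + 1, N => (r + 1) * (N + 1) * relBound r (2 * N ^ 2)

lemma relBound_pos (r N : ℕ) : 0 < relBound r N := by
  induction r generalizing N with
  | zero => exact Nat.one_pos
  | succ r ih => exact Nat.mul_pos (by positivity) (ih _)

lemma relBound_mono_right (r : ℕ) : Monotone (relBound r) := by
  induction r with
  | zero => exact fun _ _ _ => le_rfl
  | succ r ih =>
    intro N N' h
    have : 2 * N ^ 2 ≤ 2 * N' ^ 2 := by gcongr
    exact Nat.mul_le_mul (by gcongr) (ih this)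

lemma relBound_mono_left (N : ℕ) : Monotone (relBound · N) := by
  refine monotone_nat_of_le_succ fun r => ?_
  calc relBound r N ≤ relBound r (2 * N ^ 2) := relBound_mono_right r (by nlinarith)
    _ ≤ (r + 1) * (N + 1) * relBound r (2 * N ^ 2) := Nat.le_mul_of_pos_left _ (by positivity)

lemma sum_smul_eliminate (g : ι → ℤ) (p : ι → κ → ℤ) (s : Finset ι) (j₀ : ι) (i₀ : κ) :
    ∑ j ∈ s, g j • (p j₀ i₀ • p j - p j i₀ • p j₀)
      = p j₀ i₀ • ∑ j ∈ s, g j • p j - (∑ j ∈ s, g j * p j i₀) • p j₀ := by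
  simp only [smul_sub, sum_sub_distrib, smul_sum, sum_smul, smul_smul]
  congr 1
  exact sum_congr rfl fun j _ => by ring_nf

lemma abs_eliminate_apply_le {p : ι → κ → ℤ} {N : ℕ} {j j₀ : ι} (hj : ∀ i, |p j i| ≤ N)
    (hj₀ : ∀ i, |p j₀ i| ≤ N) (i₀ i : κ) :
    |(p j₀ i₀ • p j - p j i₀ • p j₀) i| ≤ ((2 * N ^ 2 : ℕ) : ℤ) := by
  calc |p j₀ i₀ * p j i - p j i₀ * p j₀ i| ≤ |p j₀ i₀| * |p j i| + |p j i₀| * |p j₀ i| := by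
        rw [← abs_mul, ← abs_mul]
        exact abs_sub _ _
    _ ≤ N * N + N * N := by gcongr <;> simp only [hj, hj₀]
    _ = ((2 * N ^ 2 : ℕ) : ℤ) := by push_cast; ring

variable [DecidableEq ι]

lemma not_linearIndepOn_eliminate {p : ι → κ → ℤ} {s : Finset ι} {j₀ : ι} {i₀ : κ}
    (hj₀ : j₀ ∉ s) (ha : p j₀ i₀ ≠ 0) (hdep : ¬ LinearIndepOn ℤ p ↑(insert j₀ s)) :
    ¬ LinearIndepOn ℤ (fun j => p j₀ i₀ • p j - p j i₀ • p j₀) ↑s := by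
  obtain ⟨g, hrel, j, hj, hgj⟩ := not_linearIndepOn_finset_iff.1 hdep
  rw [sum_insert hj₀] at hrel
  have hrel_i₀ : g j₀ * p j₀ i₀ + ∑ j ∈ s, g j * p j i₀ = 0 := by
    simpa using congrFun hrel i₀
  refine not_linearIndepOn_finset_iff.2 ⟨g, ?_, ?_⟩
  · rw [sum_smul_eliminate, eq_neg_of_add_eq_zero_right hrel, eq_neg_of_add_eq_zero_right hrel_i₀]
    module
  · by_contra! hzero
    have hs : ∑ j ∈ s, g j • p j = 0 := sum_eq_zero fun j hj => by simp [hzero j hj]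
    rw [hs, add_zero] at hrel
    have hg₀ : g j₀ = 0 := by
      simpa [ha] using congrFun hrel i₀
    rcases mem_insert.1 hj with rfl | hj
    · exact hgj hg₀
    · exact hgj (hzero j hj)

lemma exists_relation_insert_of_eliminate {p : ι → κ → ℤ} {s : Finset ι} {j₀ : ι} {i₀ : κ}
    {N R : ℕ} {μ : ι → ℤ} (hj₀ : j₀ ∉ s) (ha : p j₀ i₀ ≠ 0)
    (hp : ∀ j ∈ insert j₀ s, ∀ i, |p j i| ≤ N)
    (hμ : ∑ j ∈ s, μ j • (p j₀ i₀ • p j - p j i₀ • p j₀) = 0) (hμ₁ : ∃ j ∈ s, μ j ≠ 0)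
    (hμR : ∀ j ∈ s, |μ j| ≤ R) :
    ∃ g : ι → ℤ, ∑ j ∈ insert j₀ s, g j • p j = 0 ∧ (∃ j ∈ insert j₀ s, g j ≠ 0) ∧
      ∀ j ∈ insert j₀ s, |g j| ≤ ((#s + 1) * (N + 1) * R : ℕ) := by
  rw [sum_smul_eliminate, sub_eq_zero] at hμ
  obtain ⟨j₁, hj₁, hμ₁⟩ := hμ₁
  have hne : ∀ j ∈ s, j ≠ j₀ := fun j hj => ne_of_mem_of_not_mem hj hj₀
  have hpN : ∀ j ∈ s, |p j i₀| ≤ N := fun j hj => hp j (mem_insert_of_mem hj) i₀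
  have haN : |p j₀ i₀| ≤ N := hp j₀ (mem_insert_self _ _) i₀
  set g : ι → ℤ := fun j => if j = j₀ then -∑ j ∈ s, μ j * p j i₀ else p j₀ i₀ * μ j
  have hgs : ∀ j ∈ s, g j = p j₀ i₀ * μ j := fun j hj => if_neg (hne j hj)
  refine ⟨g, ?_, ⟨j₁, mem_insert_of_mem hj₁, by simp [hgs j₁ hj₁, ha, hμ₁]⟩, fun j hj => ?_⟩
  · rw [sum_insert hj₀, sum_congr rfl fun j hj => by rw [hgs j hj, mul_smul], ← smul_sum, hμ]
    simp [g]
  rcases mem_insert.1 hj with rfl | hj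
  · simp only [g, if_pos, abs_neg]
    calc |∑ j ∈ s, μ j * p j i₀| ≤ ∑ j ∈ s, |μ j| * |p j i₀| := by
          simpa only [abs_mul] using abs_sum_le_sum_abs (fun j => μ j * p j i₀) s
      _ ≤ ∑ _j ∈ s, (R : ℤ) * N := sum_le_sum fun j hj => by
          gcongr
          exacts [hμR j hj, hpN j hj]
      _ ≤ ((#s + 1) * (N + 1) * R : ℕ) := by
          rw [sum_const, nsmul_eq_mul]; push_cast; nlinarith
  · rw [hgs j hj, abs_mul]
    calc |p j₀ i₀| * |μ j| ≤ N * R := mul_le_mul haN (hμR j hj) (abs_nonneg _) (by positivity)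
      _ ≤ ((#s + 1) * (N + 1) * R : ℕ) := by
          exact_mod_cast Nat.mul_le_mul_right R (by nlinarith)

theorem exists_bounded_relation (s : Finset ι) :
    ∀ (N : ℕ) (p : ι → κ → ℤ), (∀ j ∈ s, ∀ i, |p j i| ≤ N) → ¬ LinearIndepOn ℤ p ↑s →
      ∃ g : ι → ℤ, ∑ j ∈ s, g j • p j = 0 ∧ (∃ j ∈ s, g j ≠ 0) ∧
        ∀ j ∈ s, |g j| ≤ relBound #s N := by
  induction s using Finset.induction_on with
  | empty => simp
  | insert j₀ s hj₀ ih =>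
    intro N p hp hdep
    rw [card_insert_of_notMem hj₀]
    by_cases hp₀ : p j₀ = 0
    · refine ⟨Pi.single j₀ 1, ?_, ⟨j₀, mem_insert_self _ _, by simp⟩, fun j _ => ?_⟩
      · rw [sum_insert hj₀, sum_eq_zero fun j hj => by simp [ne_of_mem_of_not_mem hj hj₀]]
        simp [hp₀]
      · have := relBound_pos (#s + 1) N
        rcases eq_or_ne j j₀ with rfl | hj <;> simp [*]; omega
    obtain ⟨i₀, ha⟩ : ∃ i₀, p j₀ i₀ ≠ 0 := Function.ne_iff.1 hp₀
    have hp₀ := hp j₀ (mem_insert_self _ _)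
    obtain ⟨μ, hμ, hμ₁, hμR⟩ := ih (2 * N ^ 2) _
      (fun j hj => abs_eliminate_apply_le (hp j (mem_insert_of_mem hj)) hp₀ i₀)
      (not_linearIndepOn_eliminate hj₀ ha hdep)
    exact exists_relation_insert_of_eliminate hj₀ ha hp hμ hμ₁ hμR

end BoundedRelations

section LexMinimal

variable {m t : ℕ}

lemma exists_card_le_not_linearIndepOn {ι : Type*} {v : ι → Fin m → ℤ} {L : Finset ι}
    (h : ¬ LinearIndepOn ℤ v ↑L) : ∃ s ⊆ L, #s ≤ m + 1 ∧ ¬ LinearIndepOn ℤ v ↑s := by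
  by_cases hL : #L ≤ m + 1
  · exact ⟨L, subset_refl _, hL, h⟩
  obtain ⟨s, hs, hcard⟩ := exists_subset_card_eq (s := L) (n := m + 1) (by omega)
  refine ⟨s, hs, hcard.le, fun hli => ?_⟩
  have := hli.fintype_card_le_finrank
  simp only [Finset.coe_sort_coe, Fintype.card_coe, Module.finrank_fin_fun] at this
  omega

lemma exists_lex_lt_of_relation (P : Fin t → Fin m → ℕ) {c : Fin t → ℕ} {g : Fin t → ℤ}
    (hg : g ≠ 0) (hrel : ∑ j, g j • (fun i => (P j i : ℤ)) = 0) (hle : ∀ j, |g j| ≤ c j) :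
    ∃ c' : Fin t → ℕ, toLex c' < toLex c ∧ ∑ j, c' j • P j = ∑ j, c j • P j := by
  obtain ⟨g, ⟨j₁, hbefore, hneg⟩, hrel, hle⟩ : ∃ g : Fin t → ℤ, toLex g < toLex 0 ∧
      ∑ j, g j • (fun i => (P j i : ℤ)) = 0 ∧ ∀ j, |g j| ≤ c j := by
    rcases lt_or_gt_of_ne (show toLex g ≠ toLex 0 from hg) with h | h
    · exact ⟨g, h, hrel, hle⟩
    · refine ⟨-g, neg_lt_zero.2 h, ?_, by simpa using hle⟩
      simp only [Pi.neg_apply, neg_smul, sum_neg_distrib, hrel, neg_zero]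
  simp only [Pi.toLex_apply, Pi.zero_apply] at hbefore hneg
  have hc' : ∀ j, ((c j + g j).toNat : ℤ) = c j + g j :=
    fun j => Int.toNat_of_nonneg (by linarith [neg_abs_le (g j), hle j])
  refine ⟨fun j => (c j + g j).toNat, ⟨j₁, fun j hj => ?_, ?_⟩, ?_⟩
  · show (c j + g j).toNat = c j
    rw [hbefore j hj, add_zero, Int.toNat_natCast]
  · have := hc' j₁
    show (c j₁ + g j₁).toNat < c j₁
    omega
  · funext i
    have hi := congrFun hrel i
    simp only [Finset.sum_apply, Pi.smul_apply, smul_eq_mul, Pi.zero_apply] at hi ⊢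
    zify
    simp only [hc', add_mul, sum_add_distrib, hi, add_zero]

theorem exists_coeffs_linearIndepOn (P : Fin t → Fin m → ℕ) {n : ℕ} (hP : ∀ j i, P j i ≤ n)
    (c₀ : Fin t → ℕ) :
    ∃ c : Fin t → ℕ, ∑ j, c j • P j = ∑ j, c₀ j • P j ∧
      LinearIndepOn ℤ (fun j i => (P j i : ℤ)) {j | relBound (m + 1) n ≤ c j} := by
  obtain ⟨d, hd, hmin⟩ := wellFounded_lt.has_min
    {d : Lex (Fin t → ℕ) | ∑ j, ofLex d j • P j = ∑ j, c₀ j • P j} ⟨toLex c₀, rfl⟩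
  refine ⟨ofLex d, hd, ?_⟩
  by_contra hli
  set c := ofLex d
  set L : Finset (Fin t) := {j | relBound (m + 1) n ≤ c j}
  have hL : {j | relBound (m + 1) n ≤ c j} = (L : Set (Fin t)) := by ext; simp [L]
  rw [hL] at hli
  obtain ⟨s, hsL, hs, hdep⟩ := exists_card_le_not_linearIndepOn hli
  obtain ⟨g, hrel, ⟨j₁, hj₁, hg₁⟩, hgs⟩ :=
    exists_bounded_relation s n _ (fun j _ i => by simpa using hP j i) hdep
  have hle : ∀ j, |if j ∈ s then g j else 0| ≤ c j := by
    intro j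
    split_ifs with hj
    · calc |g j| ≤ relBound #s n := hgs j hj
        _ ≤ relBound (m + 1) n := by exact_mod_cast relBound_mono_left n hs
        _ ≤ c j := by exact_mod_cast (mem_filter.1 (hsL hj)).2
    · simp
  obtain ⟨c', hlt, hsum⟩ := exists_lex_lt_of_relation P
    (fun h => hg₁ (by simpa [hj₁] using congrFun h j₁))
    (by simpa only [ite_smul, zero_smul, sum_ite_mem, univ_inter] using hrel) hle
  exact hmin (toLex c') (hsum.trans hd) hlt

end LexMinimal

section LinearSets

variable {m : ℕ}

lemma mem_linSet_iff {k : ℕ} {v₀ x : Fin m → ℕ} {vs : Fin k → Fin m → ℕ} :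
    x ∈ linSet v₀ vs ↔ ∃ c : Fin k → ℕ, x = v₀ + ∑ j, c j • vs j := by
  simp [linSet, funext_iff, Finset.sum_apply]

lemma self_mem_linSet {k : ℕ} (v₀ : Fin m → ℕ) (vs : Fin k → Fin m → ℕ) : v₀ ∈ linSet v₀ vs :=
  mem_linSet_iff.2 ⟨0, by simp⟩

lemma mem_linSet_succ_iff {k : ℕ} {v₀ x : Fin m → ℕ} {T : Fin (k + 1) → Fin m → ℕ} :
    x ∈ linSet v₀ T ↔ ∃ e : ℕ, x ∈ linSet (v₀ + e • T 0) (Fin.tail T) := by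
  simp only [mem_linSet_iff, Fin.sum_univ_succ, Fin.tail]
  constructor
  · rintro ⟨c, rfl⟩
    exact ⟨c 0, Fin.tail c, by simp [Fin.tail, add_assoc]⟩
  · rintro ⟨e, c, rfl⟩
    exact ⟨Fin.cons e c, by simp [add_assoc]⟩

lemma linSet_tail_subset {k e : ℕ} {v₀ : Fin m → ℕ} {T : Fin (k + 1) → Fin m → ℕ} :
    linSet (v₀ + e • T 0) (Fin.tail T) ⊆ linSet v₀ T :=
  fun _ hx => mem_linSet_succ_iff.2 ⟨e, hx⟩

lemma linSet_add_nsmul_subset {k d : ℕ} {v₀ : Fin m → ℕ} {T : Fin (k + 1) → Fin m → ℕ} :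
    linSet (v₀ + d • T 0) T ⊆ linSet v₀ T := by
  intro x hx
  obtain ⟨e, hx⟩ := mem_linSet_succ_iff.1 hx
  rw [add_assoc, ← add_nsmul] at hx
  exact linSet_tail_subset hx

lemma linIndepZ_iff {k : ℕ} {vs : Fin k → Fin m → ℕ} :
    LinIndepZ vs ↔ LinearIndependent ℤ (fun j i => (vs j i : ℤ)) := by
  simp [LinIndepZ, Fintype.linearIndependent_iff, funext_iff, Finset.sum_apply]

lemma LinIndepZ.card_le {k : ℕ} {vs : Fin k → Fin m → ℕ} (h : LinIndepZ vs) : k ≤ m := by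
  simpa using (linIndepZ_iff.1 h).fintype_card_le_finrank

lemma LinIndepZ.tail {k : ℕ} {T : Fin (k + 1) → Fin m → ℕ} (h : LinIndepZ T) :
    LinIndepZ (Fin.tail T) :=
  linIndepZ_iff.2 ((linIndepZ_iff.1 h).comp Fin.succ (Fin.succ_injective k))

lemma LinIndepZ.ne_zero {k : ℕ} {T : Fin k → Fin m → ℕ} (h : LinIndepZ T) (a : Fin k) :
    T a ≠ 0 := by
  intro ha
  exact (linIndepZ_iff.1 h).ne_zero a (by simp [ha]; rfl)

lemma card_le_of_forall_le {s : Finset (Fin m → ℕ)} {B : ℕ} (hs : ∀ v ∈ s, ∀ i, v i ≤ B) :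
    #s ≤ (B + 1) ^ m := by
  calc #s ≤ #(Iic fun _ : Fin m => B) := card_le_card fun v hv => mem_Iic.2 (hs v hv)
    _ = (B + 1) ^ m := by simp [Pi.card_Iic]

lemma sum_smul_apply_le {t n B : ℕ} {P : Fin t → Fin m → ℕ} (hP : ∀ j i, P j i ≤ n)
    {c : Fin t → ℕ} {s : Finset (Fin t)} (hc : ∀ j ∈ s, c j ≤ B) (i : Fin m) :
    (∑ j ∈ s, c j • P j) i ≤ t * B * n := by
  calc (∑ j ∈ s, c j • P j) i = ∑ j ∈ s, c j * P j i := by simp [Finset.sum_apply]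
    _ ≤ ∑ _j : Fin t, B * n :=
      (sum_le_sum fun j hj => Nat.mul_le_mul (hc j hj) (hP j i)).trans
        (sum_le_sum_of_subset (subset_univ _))
    _ = t * B * n := by simp [mul_assoc]

theorem exists_linSet_of_mem_closure {n : ℕ} {C : Set (Fin m → ℕ)} (hC : ∀ c ∈ C, ∀ i, c i ≤ n)
    {s : Fin m → ℕ} (hs : s ∈ AddSubmonoid.closure C) :
    ∃ k, ∃ (v₀ : Fin m → ℕ) (T : Fin k → Fin m → ℕ), (∀ a, T a ∈ C) ∧ LinIndepZ T ∧
      v₀ ∈ AddSubmonoid.closure C ∧ (∀ i, v₀ i ≤ (n + 1) ^ m * relBound (m + 1) n * n) ∧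
      s ∈ linSet v₀ T := by
  obtain ⟨t, P, hrange⟩ := ((Set.finite_Iic fun _ => n).subset fun c hc => hC c hc).fin_embedding
  have hP : ∀ j, P j ∈ C := fun j => hrange ▸ Set.mem_range_self j
  have ht : t ≤ (n + 1) ^ m := by
    simpa using card_le_of_forall_le (s := univ.map P) (B := n)
      (by simpa using fun j => hC _ (hP j))
  obtain ⟨c₀, rfl⟩ := AddSubmonoid.mem_closure_range_iff_of_fintype.1 (hrange ▸ hs)
  set B := relBound (m + 1) n
  obtain ⟨c, hc, hli⟩ := exists_coeffs_linearIndepOn P (fun j => hC _ (hP j)) c₀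
  set L : Finset (Fin t) := {j | B ≤ c j}
  set e : Fin #L ≃ L := L.equivFin.symm
  refine ⟨#L, ∑ j ∈ univ.filter (fun j => ¬ B ≤ c j), c j • P j, fun a => P (e a),
    fun a => hP _, ?_, sum_mem fun j _ => nsmul_mem (AddSubmonoid.subset_closure (hP j)) _,
    fun i => ?_, ?_⟩
  · have : LinearIndepOn ℤ (fun j i => (P j i : ℤ)) ↑L := by
      convert hli using 1; ext; simp [L, B]
    exact linIndepZ_iff.2 (this.comp (fun a => ⟨e a, (e a).2⟩)
      fun a b h => e.injective (Subtype.ext (by simpa using h)))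
  · refine (sum_smul_apply_le (fun j => hC _ (hP j)) (fun j hj => ?_) i).trans (by gcongr)
    exact (not_le.1 (mem_filter.1 hj).2).le
  · rw [mem_linSet_iff]
    refine ⟨fun a => c (e a), ?_⟩
    rw [← hc, ← sum_filter_add_sum_filter_not univ (fun j => B ≤ c j), add_comm]
    congr 1
    exact (sum_coe_sort L (fun j => c j • P j)).symm.trans (e.sum_comp _).symm

end LinearSets
section Lists

variable {α : Type*} [DecidableEq α]

lemma List.toFinset_take_append_drop_eq {l : List α} {i j : ℕ}
    (h : ∀ x ∈ l, l.idxOf x ≤ i ∨ j < l.idxOf x) :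
    (l.take (i + 1) ++ l.drop (j + 1)).toFinset = l.toFinset := by
  ext x
  simp only [List.mem_toFinset, List.mem_append]
  refine ⟨fun hx => hx.elim List.mem_of_mem_take List.mem_of_mem_drop, fun hx => ?_⟩
  have hlt := List.idxOf_lt_length_iff.2 hx
  have hget := List.getElem_idxOf hlt
  rcases h x hx with hle | hgt
  · left
    rw [List.mem_take_iff_getElem]
    exact ⟨_, by omega, hget⟩
  · right
    rw [List.mem_drop_iff_getElem]
    exact ⟨l.idxOf x - (j + 1), by omega, by convert hget using 2; omega⟩

lemma exists_window_free_of_idxOf (l : List α) (n : ℕ) (hcard : l.toFinset.card ≤ n) :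
    ∃ k ≤ n, ∀ x ∈ l, l.idxOf x ≤ k * n ∨ k * n + n < l.idxOf x := by
  -- `(i - 1) / n = k` says that a position `i ≠ 0` lies in the window `(k * n, k * n + n]`.
  obtain ⟨k, hk, hkK⟩ := exists_mem_notMem_of_card_lt_card
    (t := range (n + 1)) (s := l.toFinset.image fun x => (l.idxOf x - 1) / n)
    (by rw [card_range]; exact card_image_le.trans_lt (Nat.lt_succ_of_le hcard))
  refine ⟨k, by simpa [Nat.lt_succ_iff] using hk, fun x hx => ?_⟩
  by_contra! hwin
  exact hkK (mem_image.2 ⟨x, List.mem_toFinset.2 hx,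
    Nat.div_eq_of_lt_le (by omega) (by rw [Nat.succ_mul]; omega)⟩)

lemma exists_getElem_eq_of_card_le (l : List α) {a n : ℕ} (hcard : l.toFinset.card ≤ n)
    (hlen : a + n < l.length) :
    ∃ i j, ∃ (hij : i < j) (hj : j < l.length), a ≤ i ∧ j ≤ a + n ∧ l[i] = l[j] := by
  have hget : ∀ p (hp : p < n + 1), l.getD (a + p) l[0] = l[a + p] := fun p hp =>
    List.getD_eq_getElem _ _ _
  obtain ⟨p₁, hp₁, p₂, hp₂, hne, heq⟩ := exists_ne_map_eq_of_card_lt_of_maps_to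
    (s := range (n + 1)) (t := l.toFinset) (f := fun p => l.getD (a + p) l[0])
    (by simpa using hcard) fun p hp => by
      rw [mem_coe, mem_range] at hp
      rw [mem_coe, List.mem_toFinset]
      dsimp only
      rw [hget p hp]
      exact List.getElem_mem _
  simp only [mem_range] at hp₁ hp₂
  simp only [hget p₁ hp₁, hget p₂ hp₂] at heq
  rcases lt_or_gt_of_ne hne with h | h
  · exact ⟨_, _, by omega, by omega, by omega, by omega, heq⟩
  · exact ⟨_, _, by omega, by omega, by omega, by omega, heq.symm⟩

theorem exists_removable_repeat (l : List α) (n : ℕ) (hcard : l.toFinset.card ≤ n)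
    (hlen : n * n + n < l.length) :
    ∃ i j, ∃ (hij : i < j) (hj : j < l.length), j ≤ i + n ∧ l[i] = l[j] ∧
      (l.take (i + 1) ++ l.drop (j + 1)).toFinset = l.toFinset := by
  obtain ⟨k, hk, hwin⟩ := exists_window_free_of_idxOf l n hcard
  obtain ⟨i, j, hij, hj, hi, hjk, heq⟩ := exists_getElem_eq_of_card_le l hcard
    (a := k * n) (by nlinarith)
  refine ⟨i, j, hij, hj, by omega, heq, List.toFinset_take_append_drop_eq fun x hx => ?_⟩
  have := hwin x hx
  omega

end Lists

namespace NFA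

variable {α σ : Type*}

variable (A : NFA α σ) in
/-- `A.IsRun q w qs q'`: reading `w` from `q`, the automaton can pass through the states `qs`, one
after each letter, ending in `q'`; the states visited are those of `q :: qs`. -/
inductive IsRun : σ → List α → List σ → σ → Prop
  | nil (q : σ) : IsRun q [] [] q
  | cons {q q' q'' : σ} {a : α} {w : List α} {qs : List σ} :
      q' ∈ A.step q a → IsRun q' w qs q'' → IsRun q (a :: w) (q' :: qs) q''

variable {A : NFA α σ}

namespace IsRun

variable {q q' p : σ} {w u : List α} {qs us : List σ}

lemma length_eq (h : A.IsRun q w qs q') : qs.length = w.length := by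
  induction h with
  | nil => rfl
  | cons _ _ ih => simp [ih]

lemma append (h₁ : A.IsRun q w qs p) (h₂ : A.IsRun p u us q') :
    A.IsRun q (w ++ u) (qs ++ us) q' := by
  induction h₁ with
  | nil => exact h₂
  | cons hs _ ih => exact cons hs (ih h₂)

lemma take_drop (h : A.IsRun q w qs q') {i : ℕ} (hi : i < (q :: qs).length) :
    A.IsRun q (w.take i) (qs.take i) (q :: qs)[i] ∧
      A.IsRun (q :: qs)[i] (w.drop i) (qs.drop i) q' := by
  induction h generalizing i with
  | nil q => obtain rfl : i = 0 := by simpa using hi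
             exact ⟨nil q, nil q⟩
  | cons hs hr ih =>
    cases i with
    | zero => exact ⟨nil _, cons hs hr⟩
    | succ i =>
      obtain ⟨h₁, h₂⟩ := ih (i := i) (by simpa using hi)
      exact ⟨cons hs h₁, h₂⟩

lemma exists_split_of_mem (h : A.IsRun q w qs q') (hp : p ∈ q :: qs) :
    ∃ w₁ w₂ qs₁ qs₂, w = w₁ ++ w₂ ∧ qs = qs₁ ++ qs₂ ∧
      A.IsRun q w₁ qs₁ p ∧ A.IsRun p w₂ qs₂ q' := by
  induction h with
  | nil q =>
    obtain rfl := List.mem_singleton.1 hp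
    exact ⟨[], [], [], [], rfl, rfl, nil p, nil p⟩
  | @cons q _ _ a w qs hs hr ih =>
    rcases List.mem_cons.1 hp with rfl | hp
    · exact ⟨[], a :: w, [], _, rfl, rfl, nil p, cons hs hr⟩
    · obtain ⟨w₁, w₂, qs₁, qs₂, rfl, rfl, h₁, h₂⟩ := ih hp
      exact ⟨a :: w₁, w₂, _ :: qs₁, qs₂, rfl, rfl, cons hs h₁, h₂⟩

lemma remove_segment (h : A.IsRun q w qs q') {i j : ℕ} (hij : i ≤ j)
    (hj : j < (q :: qs).length) (heq : (q :: qs)[i] = (q :: qs)[j]) :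
    A.IsRun q (w.take i ++ w.drop j) (qs.take i ++ qs.drop j) q' ∧
      A.IsRun (q :: qs)[i] ((w.drop i).take (j - i)) ((qs.drop i).take (j - i)) (q :: qs)[i] := by
  have hj' : j ≤ qs.length := by simpa [Nat.lt_succ_iff] using hj
  obtain ⟨h₁, h₂⟩ := h.take_drop (i := i) (by simp; omega)
  have hdrop : (q :: qs)[i] :: qs.drop i = (q :: qs).drop i :=
    (List.drop_eq_getElem_cons _).symm
  obtain ⟨h₃, h₄⟩ := h₂.take_drop (i := j - i) (by simp; omega)
  have hmid : ((q :: qs)[i] :: qs.drop i)[j - i]'(by simp; omega) = (q :: qs)[i] := by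
    refine (?_ : _ = (q :: qs)[j]).trans heq.symm
    convert List.getElem_drop (xs := q :: qs) (i := i) (j := j - i) (h := by simp; omega) using 2
    omega
  rw [hmid, List.drop_drop, List.drop_drop] at h₄
  rw [hmid] at h₃
  refine ⟨?_, h₃⟩
  convert h₁.append h₄ using 3 <;> omega

end IsRun

lemma exists_isRun_iff_nonempty_path {q q' : σ} {w : List α} :
    (∃ qs, A.IsRun q w qs q') ↔ Nonempty (A.Path q q' w) := by
  constructor
  · rintro ⟨qs, h⟩
    induction h with
    | nil q => exact ⟨Path.nil q⟩
    | cons hs _ ih => exact ⟨Path.cons _ _ _ _ _ hs ih.some⟩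
  · rintro ⟨p⟩
    induction p with
    | nil q => exact ⟨[], IsRun.nil q⟩
    | cons _ _ _ _ _ hs _ ih =>
      obtain ⟨qs, h⟩ := ih
      exact ⟨_, IsRun.cons hs h⟩

theorem mem_accepts_iff_isRun {w : List α} :
    w ∈ A.accepts ↔ ∃ q ∈ A.start, ∃ q' ∈ A.accept, ∃ qs, A.IsRun q w qs q' := by
  simp only [accepts_iff_exists_path, exists_isRun_iff_nonempty_path]

end NFA

section ParikhRuns

open NFA

variable {m : ℕ} {σ : Type*} {A : NFA (Fin m) σ}

lemma parikh_append (w₁ w₂ : List (Fin m)) : parikh (w₁ ++ w₂) = parikh w₁ + parikh w₂ :=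
  funext fun _ => List.count_append ..

lemma parikh_le_length (w : List (Fin m)) (i : Fin m) : parikh w i ≤ w.length :=
  List.count_le_length

def cycleParikh (A : NFA (Fin m) σ) (V : Finset σ) (n : ℕ) : Set (Fin m → ℕ) :=
  {v | ∃ p u us, A.IsRun p u us p ∧ (∀ x ∈ p :: us, x ∈ V) ∧ u.length ≤ n ∧ parikh u = v}

variable [DecidableEq σ] {q q' : σ} {w : List (Fin m)} {qs : List σ}

lemma NFA.IsRun.insert_cycle {p : σ} {u : List (Fin m)} {us : List σ} (h : A.IsRun q w qs q')
    (hc : A.IsRun p u us p) (hp : p ∈ q :: qs) :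
    ∃ w' qs', A.IsRun q w' qs' q' ∧ (q :: qs').toFinset = (q :: qs).toFinset ∪ us.toFinset ∧
      parikh w' = parikh w + parikh u := by
  obtain ⟨w₁, w₂, qs₁, qs₂, rfl, rfl, h₁, h₂⟩ := h.exists_split_of_mem hp
  refine ⟨w₁ ++ u ++ w₂, qs₁ ++ us ++ qs₂, (h₁.append hc).append h₂, ?_, ?_⟩
  · ext x
    simp only [List.toFinset_cons, List.toFinset_append, mem_union, mem_insert]
    tauto
  · simp only [parikh_append]
    abel

theorem NFA.IsRun.exists_parikh_eq_add {n : ℕ} {V : Finset σ} {v : Fin m → ℕ}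
    (h : A.IsRun q w qs q') (hV : (q :: qs).toFinset = V)
    (hv : v ∈ AddSubmonoid.closure (cycleParikh A V n)) :
    ∃ w' qs', A.IsRun q w' qs' q' ∧ (q :: qs').toFinset = V ∧ parikh w' = parikh w + v := by
  induction hv using AddSubmonoid.closure_induction generalizing w qs with
  | mem v hv =>
    obtain ⟨p, u, us, hc, hcV, -, rfl⟩ := hv
    obtain ⟨w', qs', h', hV', hw'⟩ :=
      h.insert_cycle hc (List.mem_toFinset.1 (hV ▸ hcV p List.mem_cons_self))
    refine ⟨w', qs', h', ?_, hw'⟩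
    rw [hV', hV, union_eq_left]
    exact fun x hx => hcV x (List.mem_cons_of_mem _ (List.mem_toFinset.1 hx))
  | zero => exact ⟨w, qs, h, hV, (add_zero _).symm⟩
  | add x y _ _ ihx ihy =>
    obtain ⟨w₁, qs₁, h₁, hV₁, hw₁⟩ := ihx h hV
    obtain ⟨w₂, qs₂, h₂, hV₂, hw₂⟩ := ihy h₁ hV₁
    exact ⟨w₂, qs₂, h₂, hV₂, by rw [hw₂, hw₁, add_assoc]⟩

variable [Fintype σ]

theorem NFA.IsRun.exists_shorter (h : A.IsRun q w qs q')
    (hlong : Fintype.card σ * Fintype.card σ + Fintype.card σ ≤ w.length) :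
    ∃ w' qs', A.IsRun q w' qs' q' ∧ w'.length < w.length ∧
      (q :: qs').toFinset = (q :: qs).toFinset ∧
      ∃ c ∈ cycleParikh A (q :: qs).toFinset (Fintype.card σ), parikh w = parikh w' + c := by
  have hlen := h.length_eq
  obtain ⟨i, j, hij, hj, hjn, heq, hvis⟩ := exists_removable_repeat (q :: qs) (Fintype.card σ)
    (card_le_univ _) (by simp; omega)
  obtain ⟨h₁, h₂⟩ := h.remove_segment hij.le hj heq
  simp only [List.length_cons] at hj
  refine ⟨_, _, h₁, by simp; omega, by simpa using hvis, _,
    ⟨_, _, _, h₂, ?_, by simp; omega, rfl⟩, ?_⟩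
  · intro x hx
    rw [List.mem_toFinset]
    rcases List.mem_cons.1 hx with rfl | hx
    · exact List.getElem_mem _
    · exact List.mem_cons_of_mem _ (List.mem_of_mem_drop (List.mem_of_mem_take hx))
  · conv_lhs => rw [← List.take_append_drop i w, ← List.take_append_drop (j - i) (w.drop i),
      List.drop_drop, Nat.add_sub_cancel' hij.le]
    simp only [parikh_append]
    abel

theorem NFA.IsRun.exists_short (h : A.IsRun q w qs q') :
    ∃ w₀ qs₀, A.IsRun q w₀ qs₀ q' ∧ w₀.length < Fintype.card σ * Fintype.card σ + Fintype.card σ ∧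
      (q :: qs₀).toFinset = (q :: qs).toFinset ∧
      ∃ v ∈ AddSubmonoid.closure (cycleParikh A (q :: qs).toFinset (Fintype.card σ)),
        parikh w = parikh w₀ + v := by
  induction hlen : w.length using Nat.strong_induction_on generalizing w qs with
  | _ L ih =>
    by_cases hshort : L < Fintype.card σ * Fintype.card σ + Fintype.card σ
    · exact ⟨w, qs, h, hlen ▸ hshort, rfl, 0, zero_mem _, (add_zero _).symm⟩
    obtain ⟨w', qs', h', hw', hvis, c, hc, hwc⟩ := h.exists_shorter (by omega)
    obtain ⟨w₀, qs₀, h₀, hw₀, hvis₀, v, hv, hwv⟩ := ih _ (hlen ▸ hw') h' rfl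
    rw [hvis] at hvis₀ hv
    exact ⟨w₀, qs₀, h₀, hw₀, hvis₀, v + c, add_mem hv (AddSubmonoid.subset_closure hc),
      by rw [hwc, hwv, add_assoc]⟩

theorem exists_closure_of_mem_parikhImage {v : Fin m → ℕ} (hv : v ∈ parikhImage A.accepts) :
    ∃ (b : Fin m → ℕ) (V : Finset σ),
      (∀ i, b i ≤ Fintype.card σ * Fintype.card σ + Fintype.card σ) ∧
      (∃ s ∈ AddSubmonoid.closure (cycleParikh A V (Fintype.card σ)), v = b + s) ∧
      ∀ s ∈ AddSubmonoid.closure (cycleParikh A V (Fintype.card σ)),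
        b + s ∈ parikhImage A.accepts := by
  obtain ⟨w, hw, rfl⟩ := hv
  obtain ⟨q, hq, q', hq', qs, h⟩ := mem_accepts_iff_isRun.1 hw
  obtain ⟨w₀, qs₀, h₀, hlen, hvis, s, hs, hws⟩ := h.exists_short
  refine ⟨parikh w₀, (q :: qs).toFinset, fun i => (parikh_le_length _ _).trans hlen.le,
    ⟨s, hs, hws⟩, fun s hs => ?_⟩
  obtain ⟨w', qs', h', -, hw'⟩ := h₀.exists_parikh_eq_add hvis hs
  exact ⟨w', mem_accepts_iff_isRun.2 ⟨q, hq, q', hq', qs', h'⟩, hw'⟩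

def offsetBound (m n : ℕ) : ℕ := n * n + n + (n + 1) ^ m * relBound (m + 1) n * n

theorem exists_linSet_of_mem_parikhImage {v : Fin m → ℕ} (hv : v ∈ parikhImage A.accepts) :
    ∃ k, ∃ (v₀ : Fin m → ℕ) (T : Fin k → Fin m → ℕ), (∀ a i, T a i ≤ Fintype.card σ) ∧
      LinIndepZ T ∧ (∀ i, v₀ i ≤ offsetBound m (Fintype.card σ)) ∧
      linSet v₀ T ⊆ parikhImage A.accepts ∧ v ∈ linSet v₀ T := by
  obtain ⟨b, V, hb, ⟨s, hs, rfl⟩, hclosed⟩ := exists_closure_of_mem_parikhImage hv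
  have hC : ∀ c ∈ cycleParikh A V (Fintype.card σ), ∀ i, c i ≤ Fintype.card σ := by
    rintro _ ⟨p, u, us, -, -, hu, rfl⟩ i
    exact (parikh_le_length u i).trans hu
  obtain ⟨k, v₀, T, hTC, hind, hv₀, hv₀B, hsT⟩ := exists_linSet_of_mem_closure hC hs
  refine ⟨k, b + v₀, T, fun a => hC _ (hTC a), hind, fun i => add_le_add (hb i) (hv₀B i), ?_, ?_⟩
  · intro x hx
    obtain ⟨c, rfl⟩ := mem_linSet_iff.1 hx
    rw [add_assoc]
    exact hclosed _ (add_mem hv₀ (sum_mem fun j _ =>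
      nsmul_mem (AddSubmonoid.subset_closure (hTC j)) _))
  · obtain ⟨c, rfl⟩ := mem_linSet_iff.1 hsT
    exact mem_linSet_iff.2 ⟨c, by rw [add_assoc]⟩

end ParikhRuns

lemma not_vecUnary_parikh {m : ℕ} {w : List (Fin m)} (h : ¬ IsUnaryWord w) :
    ¬ VecUnary (parikh w) := by
  simp only [IsUnaryWord, not_forall] at h
  obtain ⟨c, hc, c', hc', hne⟩ := h
  exact fun hv => hne (hv c c' (List.count_pos_iff.2 hc).ne' (List.count_pos_iff.2 hc').ne')

section Slots

variable {m : ℕ}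

noncomputable def tupleCode (n : ℕ) {k : ℕ} (T : Fin k → Fin m → ℕ) : ℕ :=
  Fintype.equivFin (Fin k → Fin m → Fin (n + 1)) fun a i => ⟨min (T a i) n, by omega⟩

lemma tupleCode_lt (n : ℕ) {k : ℕ} (T : Fin k → Fin m → ℕ) (hk : k ≤ m) :
    tupleCode n T < (n + 1) ^ (m * m) := by
  calc tupleCode n T < Fintype.card (Fin k → Fin m → Fin (n + 1)) := Fin.is_lt _
    _ = (n + 1) ^ (m * k) := by simp [← pow_mul]
    _ ≤ (n + 1) ^ (m * m) := Nat.pow_le_pow_right n.succ_pos (Nat.mul_le_mul_left m hk)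

lemma tupleCode_injective {n k : ℕ} {T T' : Fin k → Fin m → ℕ} (hT : ∀ a i, T a i ≤ n)
    (hT' : ∀ a i, T' a i ≤ n) (h : tupleCode n T = tupleCode n T') : T = T' := by
  have := (Fintype.equivFin _).injective (Fin.val_injective h)
  funext a i
  have := congrArg Fin.val (congrFun (congrFun this a) i)
  simp only [min_eq_left (hT a i), min_eq_left (hT' a i)] at this
  exact this

def slot (n : ℕ) (u : Fin m → ℕ) : ℕ := (∑ i, u i) / (m * n + 1)

lemma slot_add_le {n : ℕ} (u : Fin m → ℕ) {g : Fin m → ℕ} (hg : ∀ i, g i ≤ n) :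
    slot n (u + g) ≤ slot n u + 1 := by
  have : ∑ i, g i ≤ m * n := by
    simpa using sum_le_sum (s := univ) fun i _ => hg i
  calc slot n (u + g) = (∑ i, u i + ∑ i, g i) / (m * n + 1) := by
        simp [slot, sum_add_distrib]
    _ ≤ (∑ i, u i + (m * n + 1)) / (m * n + 1) := Nat.div_le_div_right (by omega)
    _ = slot n u + 1 := Nat.add_div_right _ (by positivity)

lemma lt_of_slot_lt {n L : ℕ} {u : Fin m → ℕ} (h : slot n u < L) (i : Fin m) :
    u i < (m * n + 1) * L := by
  calc u i ≤ ∑ i, u i := single_le_sum (fun _ _ => Nat.zero_le _) (mem_univ i)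
    _ < (m * n + 1) * (slot n u + 1) := Nat.lt_mul_div_succ _ (by positivity)
    _ ≤ (m * n + 1) * L := Nat.mul_le_mul_left _ h

lemma exists_nsmul_slot_eq {n τ : ℕ} {v g : Fin m → ℕ} (hg : ∀ i, g i ≤ n) (hg₀ : g ≠ 0)
    (hv : slot n v ≤ τ) :
    ∃ d : ℕ, slot n (v + d • g) = τ ∧ ∀ e < d, slot n (v + e • g) < τ := by
  classical
  have hex : ∃ d : ℕ, τ ≤ slot n (v + d • g) := by
    have hsum : 1 ≤ ∑ i, g i :=
      Nat.one_le_iff_ne_zero.2 fun h => hg₀ (funext fun i => by simpa using sum_eq_zero_iff.1 h i)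
    refine ⟨τ * (m * n + 1), ?_⟩
    rw [slot, Nat.le_div_iff_mul_le (by positivity)]
    calc τ * (m * n + 1) ≤ τ * (m * n + 1) * ∑ i, g i := Nat.le_mul_of_pos_right _ hsum
      _ ≤ ∑ i, (v + (τ * (m * n + 1)) • g) i := by simp [sum_add_distrib, ← mul_sum]
  refine ⟨Nat.find hex, le_antisymm ?_ (Nat.find_spec hex),
    fun e he => not_le.1 (Nat.find_min hex he)⟩
  rcases (Nat.find hex).eq_zero_or_pos with h₀ | hpos
  · rw [h₀, zero_nsmul, add_zero]
    exact hv
  · obtain ⟨e, he⟩ := Nat.exists_eq_add_one.2 hpos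
    have := Nat.find_min hex (show e < Nat.find hex by omega)
    rw [he, succ_nsmul, ← add_assoc]
    exact (slot_add_le _ hg).trans (by omega)

end Slots

lemma eq_and_eq_of_mul_add_eq {N q q' r r' : ℕ} (hr : r < N) (hr' : r' < N)
    (h : q * N + r = q' * N + r') : q = q' ∧ r = r' := by
  have hN : 0 < N := by omega
  have h₁ := congrArg (· / N) h
  have h₂ := congrArg (· % N) h
  simp only [Nat.add_comm (q * N), Nat.add_comm (q' * N), Nat.add_mul_div_right _ _ hN,
    Nat.add_mul_mod_self_right, Nat.div_eq_of_lt hr, Nat.div_eq_of_lt hr', Nat.mod_eq_of_lt hr,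
    Nat.mod_eq_of_lt hr'] at h₁ h₂
  omega

section Decomposition

variable {m : ℕ} (S : Set (Fin m → ℕ)) (n b : ℕ)

noncomputable def pieceSlot {k : ℕ} (T : Fin k → Fin m → ℕ) : ℕ :=
  b + (m - k) * ((n + 1) ^ (m * m) + 1) + tupleCode n T

structure IsSlottedPiece {k : ℕ} (u : Fin m → ℕ) (T : Fin k → Fin m → ℕ) : Prop where
  le : ∀ a i, T a i ≤ n
  linIndepZ : LinIndepZ T
  subset : linSet u T ⊆ S
  slot_eq : slot n u = pieceSlot n b T

def decompBound (m n b : ℕ) : ℕ := (m * n + 1) * (b + (m + 1) * ((n + 1) ^ (m * m) + 1))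

variable {S n b}

lemma le_decompBound_of_slot_lt {u : Fin m → ℕ}
    (h : slot n u < b + (m + 1) * ((n + 1) ^ (m * m) + 1)) (i : Fin m) :
    u i ≤ decompBound m n b :=
  (lt_of_slot_lt h i).le

theorem IsSlottedPiece.sigma_eq {k k' : ℕ} {u : Fin m → ℕ} {T : Fin k → Fin m → ℕ}
    {T' : Fin k' → Fin m → ℕ} (h : IsSlottedPiece S n b u T) (h' : IsSlottedPiece S n b u T') :
    (⟨k, T⟩ : Σ k, Fin k → Fin m → ℕ) = ⟨k', T'⟩ := by
  have hk := h.linIndepZ.card_le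
  have hk' := h'.linIndepZ.card_le
  have heq := h.slot_eq.symm.trans h'.slot_eq
  simp only [pieceSlot, add_assoc, Nat.add_left_cancel_iff] at heq
  obtain ⟨hkk, hcode⟩ := eq_and_eq_of_mul_add_eq (Nat.lt_succ_of_lt (tupleCode_lt n T hk))
    (Nat.lt_succ_of_lt (tupleCode_lt n T' hk')) heq
  obtain rfl : k = k' := by omega
  rw [tupleCode_injective h.le h'.le hcode]

lemma IsSlottedPiece.le_decompBound {k : ℕ} {u : Fin m → ℕ} {T : Fin k → Fin m → ℕ}
    (h : IsSlottedPiece S n b u T) (i : Fin m) : u i ≤ decompBound m n b := by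
  refine le_decompBound_of_slot_lt ?_ i
  have hcode := tupleCode_lt n T h.linIndepZ.card_le
  have hk := Nat.mul_le_mul_right ((n + 1) ^ (m * m) + 1) (Nat.sub_le m k)
  rw [h.slot_eq, pieceSlot, Nat.succ_mul]
  omega

theorem slot_le_or_exists_isSlottedPiece (k : ℕ) :
    ∀ (v₀ : Fin m → ℕ) (T : Fin k → Fin m → ℕ), (∀ a i, T a i ≤ n) → LinIndepZ T →
      linSet v₀ T ⊆ S → slot n v₀ ≤ b + (m - k) * ((n + 1) ^ (m * m) + 1) →
      ∀ x ∈ linSet v₀ T, slot n x ≤ b + m * ((n + 1) ^ (m * m) + 1) ∨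
        ∃ (k' : ℕ) (u : Fin m → ℕ) (T' : Fin k' → Fin m → ℕ),
          IsSlottedPiece S n b u T' ∧ x ∈ linSet u T' := by
  induction k with
  | zero =>
    intro v₀ T _ _ _ hslot x hx
    obtain ⟨c, rfl⟩ := mem_linSet_iff.1 hx
    left
    simpa using hslot
  | succ k ih =>
    intro v₀ T hT hind hsub hslot x hx
    obtain ⟨e, hx⟩ := mem_linSet_succ_iff.1 hx
    have hcode := tupleCode_lt n T hind.card_le
    obtain ⟨d, hd, hlt⟩ := exists_nsmul_slot_eq (τ := pieceSlot n b T) (hT 0) (hind.ne_zero 0)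
      (hslot.trans (Nat.le_add_right _ _))
    by_cases hde : d ≤ e
    · right
      refine ⟨k + 1, v₀ + d • T 0, T, ⟨hT, hind, linSet_add_nsmul_subset.trans hsub, hd⟩, ?_⟩
      refine mem_linSet_succ_iff.2 ⟨e - d, ?_⟩
      rwa [add_assoc, ← add_nsmul, Nat.add_sub_cancel' hde]
    · refine ih _ _ (fun a i => hT _ i) hind.tail (linSet_tail_subset.trans hsub) ?_ x hx
      have hslot' := hlt e (by omega)
      have hm : m - k = m - (k + 1) + 1 := by have := hind.card_le; omega
      rw [pieceSlot] at hslot'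
      rw [hm, Nat.succ_mul]
      omega

variable (n) in
theorem le_decompBound_or_exists_isSlottedPiece {B : ℕ}
    (hS : ∀ v ∈ S, ∃ k, ∃ (v₀ : Fin m → ℕ) (T : Fin k → Fin m → ℕ), (∀ a i, T a i ≤ n) ∧
      LinIndepZ T ∧ (∀ i, v₀ i ≤ B) ∧ linSet v₀ T ⊆ S ∧ v ∈ linSet v₀ T)
    {v : Fin m → ℕ} (hv : v ∈ S) :
    (∀ i, v i ≤ decompBound m n (m * B)) ∨
      ∃ (k : ℕ) (u : Fin m → ℕ) (T : Fin k → Fin m → ℕ),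
        IsSlottedPiece S n (m * B) u T ∧ v ∈ linSet u T := by
  obtain ⟨k, v₀, T, hT, hind, hB, hsub, hv₀⟩ := hS v hv
  have hslot : slot n v₀ ≤ m * B + (m - k) * ((n + 1) ^ (m * m) + 1) := by
    refine (Nat.div_le_self _ _).trans (le_add_right ?_)
    simpa using sum_le_sum fun i (_ : i ∈ univ) => hB i
  refine (slot_le_or_exists_isSlottedPiece k v₀ T hT hind hsub hslot v hv₀).imp_left
    fun hsmall => le_decompBound_of_slot_lt ?_
  rw [Nat.succ_mul]
  omega

end Decomposition

lemma Finset.exists_bijOn_nat {β : Type*} [Encodable β] [Inhabited β] (G : Finset β) :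
    ∃ (I : Finset ℕ) (e : ℕ → β), Set.BijOn e I G := by
  refine ⟨G.image Encodable.encode, fun i => (Encodable.decode i).getD default, ?_, ?_, ?_⟩
  · rintro _ hi
    obtain ⟨u, hu, rfl⟩ := mem_image.1 hi
    simpa [Encodable.encodek] using hu
  · rintro _ hi _ hi' h
    obtain ⟨u, -, rfl⟩ := mem_image.1 hi
    obtain ⟨u', -, rfl⟩ := mem_image.1 hi'
    simp only [Encodable.encodek, Option.getD_some] at h
    rw [h]
  · intro u hu
    exact ⟨Encodable.encode u, mem_image_of_mem _ hu, by simp [Encodable.encodek]⟩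

theorem exists_semilinear_decomposition {m : ℕ} (S : Set (Fin m → ℕ)) (n B : ℕ)
    (hS : ∀ v ∈ S, ∃ k, ∃ (v₀ : Fin m → ℕ) (T : Fin k → Fin m → ℕ), (∀ a i, T a i ≤ n) ∧
      LinIndepZ T ∧ (∀ i, v₀ i ≤ B) ∧ linSet v₀ T ⊆ S ∧ v ∈ linSet v₀ T) :
    ∃ (Y : Set (Fin m → ℕ)) (I : Finset ℕ) (k : ℕ → ℕ) (v₀ : ℕ → (Fin m → ℕ))
      (vs : (i : ℕ) → Fin (k i) → (Fin m → ℕ)),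
      Y.Finite ∧ (∀ y ∈ Y, ∀ j, y j ≤ decompBound m n (m * B)) ∧
      #I ≤ (decompBound m n (m * B) + 1) ^ m ∧
      (∀ i ∈ I, k i ≤ m ∧ (∀ j, v₀ i j ≤ decompBound m n (m * B)) ∧ (∀ a j, vs i a j ≤ n) ∧
        LinIndepZ (vs i) ∧ v₀ i ∈ S) ∧
      Set.InjOn v₀ I ∧ S = Y ∪ ⋃ i ∈ I, linSet (v₀ i) (vs i) := by
  classical
  set M := decompBound m n (m * B)
  set G := {u | ∃ k, ∃ T : Fin k → Fin m → ℕ, IsSlottedPiece S n (m * B) u T}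
  have hGfin : G.Finite :=
    (Set.finite_Iic fun _ => M).subset fun u ⟨_, _, hu⟩ i => hu.le_decompBound i
  have hpiece : ∀ u, ∃ P : Σ k, Fin k → Fin m → ℕ, u ∈ G → IsSlottedPiece S n (m * B) u P.2 :=
    fun u => if hu : u ∈ G then ⟨⟨_, hu.choose_spec.choose⟩, fun _ => hu.choose_spec.choose_spec⟩
      else ⟨⟨0, Fin.elim0⟩, fun h => absurd h hu⟩
  choose P hP using hpiece
  obtain ⟨I, e, he⟩ := hGfin.toFinset.exists_bijOn_nat
  refine ⟨S ∩ {y | ∀ j, y j ≤ M}, I, fun i => (P (e i)).1, e, fun i => (P (e i)).2,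
    (Set.finite_Iic fun _ => M).subset fun y hy => hy.2, fun y hy => hy.2, ?_,
    fun i hi => ?_, he.injOn, ?_⟩
  · calc #I ≤ #hGfin.toFinset := card_le_card_of_injOn e he.mapsTo he.injOn
      _ ≤ (M + 1) ^ m := card_le_of_forall_le fun u hu =>
        (hP u (hGfin.mem_toFinset.1 hu)).le_decompBound
  · have h := hP _ (hGfin.mem_toFinset.1 (he.mapsTo hi))
    exact ⟨h.linIndepZ.card_le, h.le_decompBound, h.le, h.linIndepZ,
      h.subset (self_mem_linSet _ _)⟩
  · show S = _ ∪ ⋃ i ∈ (I : Set ℕ), linSet (e i) (P (e i)).2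
    rw [← Set.biUnion_image (g := fun u => linSet u (P u).2), he.image_eq, Set.Finite.coe_toFinset]
    refine (Set.union_subset Set.inter_subset_left
      (Set.iUnion₂_subset fun u hu => (hP u hu).subset)).antisymm' fun v hv => ?_
    rcases le_decompBound_or_exists_isSlottedPiece n hS hv with hsmall | ⟨k, u, T, hu, hvu⟩
    · exact Or.inl ⟨hv, hsmall⟩
    · have hG : u ∈ G := ⟨k, T, hu⟩
      have hPu : P u = ⟨k, T⟩ := (hP u hG).sigma_eq hu
      exact Or.inr (Set.mem_biUnion hG (by rw [hPu]; exact hvu))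

section Polynomials

open Polynomial

noncomputable def relPoly : ℕ → ℕ[X]
  | 0 => 1
  | r + 1 => C (r + 1 : ℕ) * (X + 1) * (relPoly r).comp (2 * X ^ 2)

lemma eval_relPoly (r N : ℕ) : (relPoly r).eval N = relBound r N := by
  induction r generalizing N with
  | zero => simp [relPoly, relBound]
  | succ r ih => simp [relPoly, relBound, eval_comp, ih]

noncomputable def decompPoly (m : ℕ) : ℕ[X] :=
  (C m * X + 1) * (C m * (X * X + X + (X + 1) ^ m * relPoly (m + 1) * X) +
    C (m + 1) * ((X + 1) ^ (m * m) + 1))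

lemma eval_decompPoly (m n : ℕ) :
    (decompPoly m).eval n = decompBound m n (m * offsetBound m n) := by
  simp [decompPoly, decompBound, offsetBound, eval_relPoly]

end Polynomials

theorem nfa_parikh_semilinear_representation_nonunary_general (m : ℕ) :
    ∃ p : Polynomial ℕ,
      ∀ (σ : Type) [Fintype σ], ∀ n : ℕ, Fintype.card σ = n →
      ∀ A : NFA (Fin m) σ, (∀ w ∈ A.accepts, ¬ IsUnaryWord w) →
      ∃ (Y : Set (Fin m → ℕ)) (I : Finset ℕ) (k : ℕ → ℕ)
        (v₀ : ℕ → (Fin m → ℕ)) (vs : (i : ℕ) → Fin (k i) → (Fin m → ℕ))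
        (x : ℕ → (Fin m → ℕ)),
        Y.Finite ∧
        (∀ y ∈ Y, ∀ j, y j ≤ p.eval n) ∧
        I.card ≤ p.eval n ∧
        (∀ i ∈ I,
          k i ≤ m ∧
          (∀ j, v₀ i j ≤ p.eval n) ∧
          (∀ a b, vs i a b ≤ n) ∧
          LinIndepZ (vs i)) ∧
        (∀ i ∈ I, ¬ VecUnary (x i) ∧ ∀ j, x i j ≤ v₀ i j) ∧
        (∀ i ∈ I, ∀ i' ∈ I, x i = x i' → i = i') ∧
        parikhImage A.accepts = Y ∪ ⋃ i ∈ I, linSet (v₀ i) (vs i) := by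
  classical
  refine ⟨decompPoly m + (decompPoly m + 1) ^ m, fun σ _ n hn A hA => ?_⟩
  subst hn
  obtain ⟨Y, I, k, v₀, vs, hY, hYM, hIM, hpieces, hinj, hcover⟩ :=
    exists_semilinear_decomposition (parikhImage A.accepts) _ _
      fun v hv => exists_linSet_of_mem_parikhImage hv
  rw [Polynomial.eval_add, Polynomial.eval_pow, Polynomial.eval_add, Polynomial.eval_one,
    eval_decompPoly]
  refine ⟨Y, I, k, v₀, vs, v₀, hY, fun y hy j => (hYM y hy j).trans (Nat.le_add_right _ _),
    hIM.trans (Nat.le_add_left _ _), fun i hi => ?_, fun i hi => ⟨?_, fun _ => le_rfl⟩,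
    fun i hi i' hi' h => hinj hi hi' h, hcover⟩
  · obtain ⟨hk, hv₀, hvs, hind, -⟩ := hpieces i hi
    exact ⟨hk, fun j => (hv₀ j).trans (Nat.le_add_right _ _), hvs, hind⟩
  · obtain ⟨w, hw, hwv⟩ := (hpieces i hi).2.2.2.2
    exact hwv ▸ not_vecUnary_parikh (hA w hw)

/-- Like the semilinear representation of Statement 7, but for NFAs all
of whose accepted words are nonunary: in addition, for each `i ∈ I` one can choose a
nonunary vector `x_i ⪯ v_{i,0}` (componentwise) such that the vectors `x_i` are pairwise
distinct. -/
theorem nfa_parikh_semilinear_representation_nonunary (m : ℕ) (hm : 1 ≤ m) :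
    ∃ p : Polynomial ℕ,
      ∀ (σ : Type) [Fintype σ], ∀ n : ℕ, Fintype.card σ = n →
      ∀ A : NFA (Fin m) σ, (∀ w ∈ A.accepts, ¬ IsUnaryWord w) →
      ∃ (Y : Set (Fin m → ℕ)) (I : Finset ℕ) (k : ℕ → ℕ)
        (v₀ : ℕ → (Fin m → ℕ)) (vs : (i : ℕ) → Fin (k i) → (Fin m → ℕ))
        (x : ℕ → (Fin m → ℕ)),
        Y.Finite ∧
        (∀ y ∈ Y, ∀ j, y j ≤ p.eval n) ∧
        I.card ≤ p.eval n ∧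
        (∀ i ∈ I,
          k i ≤ m ∧
          (∀ j, v₀ i j ≤ p.eval n) ∧
          (∀ a b, vs i a b ≤ n) ∧
          LinIndepZ (vs i)) ∧
        (∀ i ∈ I, ¬ VecUnary (x i) ∧ ∀ j, x i j ≤ v₀ i j) ∧
        (∀ i ∈ I, ∀ i' ∈ I, x i = x i' → i = i') ∧
        parikhImage A.accepts = Y ∪ ⋃ i ∈ I, linSet (v₀ i) (vs i) :=
  nfa_parikh_semilinear_representation_nonunary_general m
end

section
/- For every integer h ≥ 3 there exists a context-free grammar in Chomsky normal form with exactly h variables over the two-letter terminal alphabet {a, b} whose generated language is exactly the singleton {(ab)^{2^{h−3}}}, i.e., the single word consisting of 2^{h−3} consecutive copies of ab. -/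
/-!
Take a variable for each letter, `A → a` and `B → b`, and variables `X₀, …, Xₙ` with
`X₀ → A B` and `X_{k+1} → X_k X_k`, where `n = h - 3` and `Xₙ` is the start variable. Then `X_k`
derives `(ab)^{2^k}` by induction on `k`. Conversely, substituting for each variable the word it
is meant to derive turns both sides of every production into the same word, so this substitution
is invariant under derivation steps and the start variable derives no other terminal word.
-/

/-- A context-free grammar is in Chomsky normal form if every production has one of the
forms `B → CD` (with `C, D` different from the start variable), `B → a`, or `S → ε`. -/
def IsCNF {T : Type*} (G : ContextFreeGrammar T) : Prop :=
  ∀ r ∈ G.rules,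
    (∃ a : T, r.output = [Symbol.terminal a]) ∨
    (∃ C D : G.NT, C ≠ G.initial ∧ D ≠ G.initial ∧
      r.output = [Symbol.nonterminal C, Symbol.nonterminal D]) ∨
    (r.input = G.initial ∧ r.output = [])

/-- The word `(ab)^H` over the two-letter alphabet `{a, b}` (identified with `Fin 2`,
with `a = 0` and `b = 1`): `H` consecutive copies of `ab`. -/
def abWord (H : ℕ) : List (Fin 2) :=
  (List.replicate H ([0, 1] : List (Fin 2))).flatten

def Symbol.interpret {T N : Type*} (v : N → List T) : Symbol T N → List T
  | .terminal a => [a]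
  | .nonterminal X => v X

namespace ContextFreeGrammar

variable {T : Type*} {g : ContextFreeGrammar T}

lemma flatMap_interpret_map_terminal (v : g.NT → List T) (w : List T) :
    (w.map Symbol.terminal).flatMap (Symbol.interpret v) = w := by
  induction w with
  | nil => rfl
  | cons a w ih => simpa [Symbol.interpret] using ih

lemma Derives.flatMap_interpret_eq {v : g.NT → List T}
    (hv : ∀ r ∈ g.rules, v r.input = r.output.flatMap (Symbol.interpret v))
    {u w : List (Symbol T g.NT)} (huw : g.Derives u w) :
    u.flatMap (Symbol.interpret v) = w.flatMap (Symbol.interpret v) := by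
  induction huw with
  | refl => rfl
  | tail _ hstep ih =>
    obtain ⟨r, hr, hrw⟩ := hstep
    obtain ⟨p, q, rfl, rfl⟩ := hrw.exists_parts
    simp only [ih, List.flatMap_append, List.flatMap_singleton, Symbol.interpret, hv r hr]

lemma eq_of_mem_language {v : g.NT → List T}
    (hv : ∀ r ∈ g.rules, v r.input = r.output.flatMap (Symbol.interpret v)) {w : List T}
    (hw : w ∈ g.language) : w = v g.initial := by
  have := hw.flatMap_interpret_eq hv
  rw [flatMap_interpret_map_terminal] at this
  simpa [Symbol.interpret] using this.symm

lemma derives_of_mem_rules {r : ContextFreeRule T g.NT} (hr : r ∈ g.rules) :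
    g.Derives [.nonterminal r.input] r.output :=
  Produces.single ⟨r, hr, .input_output⟩

lemma Derives.append {u u' w w' : List (Symbol T g.NT)} (hu : g.Derives u u')
    (hw : g.Derives w w') : g.Derives (u ++ w) (u' ++ w') :=
  (hu.append_right w).trans (hw.append_left u')

lemma derives_of_binary_rule {A B C : g.NT} {u w : List (Symbol T g.NT)}
    (hr : ⟨A, [.nonterminal B, .nonterminal C]⟩ ∈ g.rules)
    (hB : g.Derives [.nonterminal B] u) (hC : g.Derives [.nonterminal C] w) :
    g.Derives [.nonterminal A] (u ++ w) :=
  (derives_of_mem_rules hr).trans (hB.append hC)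

end ContextFreeGrammar

open ContextFreeGrammar

lemma abWord_add (m l : ℕ) : abWord (m + l) = abWord m ++ abWord l := by
  simp only [abWord, List.replicate_add, List.flatten_append]

lemma abWord_two_pow_succ (k : ℕ) : abWord (2 ^ (k + 1)) = abWord (2 ^ k) ++ abWord (2 ^ k) := by
  rw [pow_succ, mul_two, abWord_add]

/-- `Sum.inl c` is the variable deriving the letter `c`, and `Sum.inr k` is `X_k`. -/
abbrev AbPowerNT (n : ℕ) : Type := Fin 2 ⊕ Fin (n + 1)

def abPowerRules (n : ℕ) : Finset (ContextFreeRule (Fin 2) (AbPowerNT n)) :=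
  Finset.univ.image (fun c => ⟨.inl c, [.terminal c]⟩) ∪
  {⟨.inr 0, [.nonterminal (.inl 0), .nonterminal (.inl 1)]⟩} ∪
  Finset.univ.image (fun k : Fin n =>
    ⟨.inr k.succ, [.nonterminal (.inr k.castSucc), .nonterminal (.inr k.castSucc)]⟩)

def abPowerGrammar (n : ℕ) : ContextFreeGrammar (Fin 2) where
  NT := AbPowerNT n
  initial := .inr (Fin.last n)
  rules := abPowerRules n

def abPowerValue (n : ℕ) : AbPowerNT n → List (Fin 2) :=
  Sum.elim (fun c => [c]) (fun k => abWord (2 ^ (k : ℕ)))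

lemma mem_abPowerRules {n : ℕ} {r : ContextFreeRule (Fin 2) (AbPowerNT n)} :
    r ∈ (abPowerGrammar n).rules ↔
      (∃ c, r = ⟨.inl c, [.terminal c]⟩) ∨
      r = ⟨.inr 0, [.nonterminal (.inl 0), .nonterminal (.inl 1)]⟩ ∨
      ∃ k : Fin n,
        r = ⟨.inr k.succ, [.nonterminal (.inr k.castSucc), .nonterminal (.inr k.castSucc)]⟩ := by
  change r ∈ abPowerRules n ↔ _
  simp only [abPowerRules, Finset.mem_union, Finset.mem_image, Finset.mem_univ,
    true_and, Finset.mem_singleton, or_assoc, eq_comm]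

lemma isCNF_abPowerGrammar (n : ℕ) : IsCNF (abPowerGrammar n) := by
  intro r hr
  rcases mem_abPowerRules.mp hr with ⟨c, rfl⟩ | rfl | ⟨k, rfl⟩
  · exact .inl ⟨c, rfl⟩
  · exact .inr (.inl ⟨_, _, Sum.inl_ne_inr, Sum.inl_ne_inr, rfl⟩)
  · have hk : Sum.inr k.castSucc ≠ (abPowerGrammar n).initial :=
      fun h => (Fin.castSucc_lt_last k).ne (Sum.inr_injective h)
    exact .inr (.inl ⟨_, _, hk, hk, rfl⟩)

lemma abPowerValue_input_eq {n : ℕ} :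
    ∀ r ∈ (abPowerGrammar n).rules,
      abPowerValue n r.input = r.output.flatMap (Symbol.interpret (abPowerValue n)) := by
  intro r hr
  rcases mem_abPowerRules.mp hr with ⟨c, rfl⟩ | rfl | ⟨k, rfl⟩
  · rfl
  · rfl
  · simp [abPowerValue, Symbol.interpret, abWord_two_pow_succ]

lemma abPowerGrammar_derives {n : ℕ} (k : Fin (n + 1)) :
    (abPowerGrammar n).Derives [.nonterminal (.inr k)]
      ((abWord (2 ^ (k : ℕ))).map Symbol.terminal) := by
  induction k using Fin.induction with
  | zero =>
    have hA : (abPowerGrammar n).Derives [.nonterminal (.inl 0)] [.terminal 0] :=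
      derives_of_mem_rules (mem_abPowerRules.mpr (.inl ⟨0, rfl⟩))
    have hB : (abPowerGrammar n).Derives [.nonterminal (.inl 1)] [.terminal 1] :=
      derives_of_mem_rules (mem_abPowerRules.mpr (.inl ⟨1, rfl⟩))
    exact derives_of_binary_rule (mem_abPowerRules.mpr (.inr (.inl rfl))) hA hB
  | succ k ih =>
    rw [Fin.val_succ, abWord_two_pow_succ, List.map_append]
    exact derives_of_binary_rule (mem_abPowerRules.mpr (.inr (.inr ⟨k, rfl⟩))) ih ih

theorem language_abPowerGrammar (n : ℕ) : (abPowerGrammar n).language = {abWord (2 ^ n)} := by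
  ext w
  refine ⟨eq_of_mem_language abPowerValue_input_eq, ?_⟩
  rintro rfl
  exact abPowerGrammar_derives (Fin.last n)

/-- For every `h ≥ 3` there exists a CFG in Chomsky normal form with
exactly `h` variables over the two-letter alphabet `{a, b}` whose generated language is
exactly the singleton `{(ab)^{2^{h-3}}}`. -/
theorem cnf_singleton_ab_power (h : ℕ) (hh : 3 ≤ h) :
    ∃ (G : ContextFreeGrammar (Fin 2)) (fG : Fintype G.NT),
      IsCNF G ∧
      @Fintype.card G.NT fG = h ∧
      G.language = {abWord (2 ^ (h - 3))} := by
  obtain ⟨n, rfl⟩ : ∃ n, h = n + 3 := ⟨h - 3, by omega⟩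
  refine ⟨abPowerGrammar n, inferInstanceAs (Fintype (AbPowerNT n)), isCNF_abPowerGrammar n,
    ?_, ?_⟩
  · change Fintype.card (AbPowerNT n) = n + 3
    rw [Fintype.card_sum, Fintype.card_fin, Fintype.card_fin]
    omega
  · rw [Nat.add_sub_cancel, language_abPowerGrammar]
end
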